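/- Let D be a separable Banach space, I an index set, and S a finite subset of ℓ∞(I; D). For every ε > 0 there exist a countable subset J ⊆ I and a linear contraction f : ℓ∞(J; D) → ℓ∞(I; D) such that ‖f(p_J(x)) − x‖ ≤ ε simultaneously for all x ∈ S. -/

import Mathlib

/-!
Evaluating the finitely many `x ∈ S` at an index `i` gives a map `Φ : I → (S → D)` into a
separable metric space, so the range of `Φ` has a countable dense subset, which is `Φ '' J` for
some countable `J ⊆ I`. Sending every `i` to some `r i ∈ J` with `Φ (r i)` `ε`-close to `Φ i`, the
composition operator `y ↦ y ∘ r` is a linear contraction that moves each `x ∈ S` by at most `ε`.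
-/

open TopologicalSpace

theorem exists_countable_forall_exists_dist_lt {X ι : Type*} [PseudoMetricSpace X]
    [SeparableSpace X] (Φ : ι → X) {ε : ℝ} (hε : 0 < ε) :
    ∃ J : Set ι, J.Countable ∧ ∀ i, ∃ j ∈ J, dist (Φ i) (Φ j) < ε := by
  obtain ⟨t, hts, htc, hdense⟩ :=
    (IsSeparable.of_separableSpace (Set.range Φ)).exists_countable_dense_subset
  have : Countable t := htc.to_subtype
  let lift : t → ι := fun z => Set.rangeSplitting Φ ⟨z, hts z.2⟩
  refine ⟨Set.range lift, Set.countable_range lift, fun i => ?_⟩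
  obtain ⟨z, hzt, hz⟩ := Metric.mem_closure_iff.1 (hdense (Set.mem_range_self i)) ε hε
  refine ⟨lift ⟨z, hzt⟩, Set.mem_range_self _, ?_⟩
  rwa [Set.apply_rangeSplitting Φ]

theorem stmt_1_general {D : Type*} [NormedAddCommGroup D] [NormedSpace ℝ D]
    [TopologicalSpace.SeparableSpace D]
    {I : Type*} (S : Finset (I → D))
    {ε : ℝ} (hε : 0 < ε) :
    ∃ J : Set I, J.Countable ∧
      ∃ f : (J → D) →ₗ[ℝ] (I → D),
        (∀ (y : J → D) (C : ℝ), 0 ≤ C → (∀ j, ‖y j‖ ≤ C) → ∀ i, ‖f y i‖ ≤ C) ∧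
        (∀ x ∈ S, ∀ i, ‖f (fun j : J => x j) i - x i‖ ≤ ε) := by
  obtain ⟨J, hJ, hnear⟩ := exists_countable_forall_exists_dist_lt (fun i (x : S) => x.1 i) hε
  choose r hrJ hr using hnear
  refine ⟨J, hJ, LinearMap.funLeft ℝ D fun i => ⟨r i, hrJ i⟩, fun y C _ hy i => hy _,
    fun x hx i => ?_⟩
  rw [LinearMap.funLeft_apply, ← dist_eq_norm, dist_comm]
  exact (dist_le_pi_dist _ _ ⟨x, hx⟩).trans (hr i).le

/-- Let `D` be a separable Banach space, `I` an index set and `S` a finite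
subset of `ℓ∞(I; D)` (bounded `D`-valued functions).  For every `ε > 0` there exist a
countable subset `J ⊆ I` and a linear contraction `f : ℓ∞(J; D) → ℓ∞(I; D)`
(contractivity expressed pointwise) such that `‖f (p_J x) − x‖_∞ ≤ ε` simultaneously
for all `x ∈ S`. -/
theorem stmt_1 {D : Type*} [NormedAddCommGroup D] [NormedSpace ℝ D]
    [TopologicalSpace.SeparableSpace D]
    {I : Type*} (S : Finset (I → D)) (hS : ∀ x ∈ S, ∃ C : ℝ, ∀ i, ‖x i‖ ≤ C)
    {ε : ℝ} (hε : 0 < ε) :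
    ∃ J : Set I, J.Countable ∧
      ∃ f : (J → D) →ₗ[ℝ] (I → D),
        (∀ (y : J → D) (C : ℝ), 0 ≤ C → (∀ j, ‖y j‖ ≤ C) → ∀ i, ‖f y i‖ ≤ C) ∧
        (∀ x ∈ S, ∀ i, ‖f (fun j : J => x j) i - x i‖ ≤ ε) :=
  stmt_1_general S hε
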